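/- Let (M,d) be a metric space and T: M → M a bi-Lipschitz bijection with constant A ≥ 1. For every integer k ≥ 1 and ρ > 0, the set {x ∈ M : B_ρ(x) ∩ T^k(B_ρ(x)) ≠ ∅} is contained in the set {x ∈ M : B_{(2A^k+2)ρ}(x) ∩ T^{2k}(B_{(2A^k+2)ρ}(x)) ≠ ∅}. -/
import Mathlib


open Metric Function

lemma iterate_lipschitz {M : Type*} [MetricSpace M] (T : M → M) (A : ℝ) (hA : 1 ≤ A)
    (hT : ∀ x y : M, dist (T x) (T y) ≤ A * dist x y) (k : ℕ) :
    ∀ x y : M, dist (T^[k] x) (T^[k] y) ≤ A ^ k * dist x y := by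
  induction k with
  | zero => intro x y; simp
  | succ n ih =>
    intro x y
    rw [Function.iterate_succ_apply', Function.iterate_succ_apply']
    calc dist (T (T^[n] x)) (T (T^[n] y)) ≤ A * dist (T^[n] x) (T^[n] y) := hT _ _
      _ ≤ A * (A ^ n * dist x y) := by
          have := ih x y
          nlinarith [dist_nonneg (x := T^[n] x) (y := T^[n] y)]
      _ = A ^ (n + 1) * dist x y := by ring

theorem short_return_doubling
    {M : Type*} [MetricSpace M] (T Tinv : M → M)
    (hleft : Function.LeftInverse Tinv T) (hright : Function.RightInverse Tinv T)
    (A : ℝ) (hA : 1 ≤ A)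
    (hT : ∀ x y : M, dist (T x) (T y) ≤ A * dist x y)
    (hTinv : ∀ x y : M, dist (Tinv x) (Tinv y) ≤ A * dist x y)
    (k : ℕ) (hk : 1 ≤ k) (ρ : ℝ) (hρ : 0 < ρ) :
    {x : M | (ball x ρ ∩ T^[k] '' ball x ρ).Nonempty} ⊆
      {x : M | (ball x ((2 * A ^ k + 2) * ρ) ∩
        T^[2 * k] '' ball x ((2 * A ^ k + 2) * ρ)).Nonempty} := by
  intro x hx
  obtain ⟨w, hw1, z, hz, hzw⟩ := hx
  have hA0 : (0:ℝ) ≤ A := le_trans zero_le_one hA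
  have hAk : (1:ℝ) ≤ A ^ k := one_le_pow₀ hA
  have hz' : dist z x < ρ := hz
  have hw' : dist w x < ρ := hw1
  have hR : ρ ≤ (2 * A ^ k + 2) * ρ := by nlinarith
  refine ⟨T^[2 * k] z, ?_, z, ?_, rfl⟩
  · have h1 : dist (T^[2 * k] z) (T^[k] z) ≤ A ^ k * dist (T^[k] z) z := by
      have := iterate_lipschitz T A hA hT k (T^[k] z) z
      have h2 : T^[2 * k] z = T^[k] (T^[k] z) := by
        rw [two_mul, Function.iterate_add_apply]
      rw [h2]; exact this
    have h3 : dist (T^[k] z) z ≤ dist (T^[k] z) x + dist x z := dist_triangle _ _ _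
    have h4 : dist (T^[k] z) x < ρ := by rw [hzw]; exact hw'
    have h5 : dist x z < ρ := by rw [dist_comm]; exact hz'
    have h6 : dist (T^[2 * k] z) x ≤ dist (T^[2 * k] z) (T^[k] z) + dist (T^[k] z) x :=
      dist_triangle _ _ _
    have : dist (T^[2 * k] z) x < (2 * A ^ k + 2) * ρ := by nlinarith
    exact this
  · exact lt_of_lt_of_le hz' hR
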